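/- arXiv:1909.01821 — 2 statements merged into one kernel-verified Lean document; each statement's English description precedes it below -/
import Mathlib

section
/- Let ε, δ ∈ (0,1) and let Q ∈ ℝ^{m×d} be a random matrix with the Strong (ε,δ)-JL Moment Property. Then for every integer ℓ ≥ 1, both I_ℓ ⊗ Q ∈ ℝ^{ℓm×ℓd} and Q ⊗ I_ℓ ∈ ℝ^{ℓm×ℓd} have the Strong (ε,δ)-JL Moment Property, where I_ℓ is the ℓ×ℓ identity matrix. -/
open MeasureTheory ProbabilityTheory Real
open scoped ENNReal NNReal

noncomputable section

instance matrixMeasurableSpace {ι κ : Type*} : MeasurableSpace (Matrix ι κ ℝ) :=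
  MeasurableSpace.pi

/-- `‖X‖_p = (𝔼 |X|^p)^(1/p)`, the `p`-th moment norm of a real random variable. -/
def pmom {Ω : Type*} [MeasureSpace Ω] (p : ℝ) (X : Ω → ℝ) : ℝ :=
  (∫ ω, |X ω| ^ p) ^ (1 / p)

/-- Squared Euclidean norm `‖x‖₂²` of a finitely supported real vector. -/
def sqNorm {ι : Type*} [Fintype ι] (x : ι → ℝ) : ℝ := ∑ i, x i ^ 2

/-- Euclidean norm `‖x‖₂`. -/
def l2norm {ι : Type*} [Fintype ι] (x : ι → ℝ) : ℝ := Real.sqrt (sqNorm x)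

/-- Frobenius norm of a matrix. -/
def frobNorm {ι κ : Type*} [Fintype ι] [Fintype κ] (A : Matrix ι κ ℝ) : ℝ :=
  Real.sqrt (∑ i, ∑ j, A i j ^ 2)

/-- Operator (spectral) norm of a matrix. -/
def opNorm {ι κ : Type*} [Fintype ι] [Fintype κ] (A : Matrix ι κ ℝ) : ℝ :=
  sSup ((fun x => l2norm (A.mulVec x)) '' {x | l2norm x ≤ 1})

/-- The Strong `(ε,δ)`-JL Moment Property of a random matrix. -/
def StrongJL {Ω : Type*} [MeasureSpace Ω] {ι κ : Type*} [Fintype ι] [Fintype κ]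
    (ε δ : ℝ) (M : Ω → Matrix ι κ ℝ) : Prop :=
  ∀ x : κ → ℝ, sqNorm x = 1 →
    (∫ ω, sqNorm ((M ω).mulVec x)) = 1 ∧
    ∀ p : ℝ, 2 ≤ p → p ≤ Real.log (1 / δ) →
      pmom p (fun ω => sqNorm ((M ω).mulVec x) - 1)
        ≤ ε / Real.exp 1 * Real.sqrt (p / Real.log (1 / δ))

/-- The `(ε,δ,p)`-JL Moment Property of a random matrix. -/
def JLMoment {Ω : Type*} [MeasureSpace Ω] {ι κ : Type*} [Fintype ι] [Fintype κ]
    (ε δ p : ℝ) (M : Ω → Matrix ι κ ℝ) : Prop :=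
  ∀ x : κ → ℝ, sqNorm x = 1 →
    pmom p (fun ω => sqNorm ((M ω).mulVec x) - 1) ≤ ε * δ ^ (1 / p)

/-- `(λ,ε,δ)`-Oblivious Subspace Embedding. -/
def OSE {Ω : Type*} [MeasureSpace Ω] {ι κ : Type*} [Fintype ι] [Fintype κ]
    (lam : ℕ) (ε δ : ℝ) (M : Ω → Matrix ι κ ℝ) : Prop :=
  ∀ V : Submodule ℝ (κ → ℝ), Module.finrank ℝ V = lam →
    ENNReal.ofReal (1 - δ) ≤
      volume {ω | ∀ x ∈ V, |l2norm ((M ω).mulVec x) - l2norm x| ≤ ε * l2norm x}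

/-- The law of a Rademacher random variable: uniform on `{-1, 1}`. -/
def radMeasure : Measure ℝ :=
  (2 : ℝ≥0∞)⁻¹ • Measure.dirac 1 + (2 : ℝ≥0∞)⁻¹ • Measure.dirac (-1)

/-! Split a unit vector `x` of `ℝ^(ℓd)` into `ℓ` blocks `yᵢ ∈ ℝ^d`. For either Kronecker product
`M` of `Q` with `I_ℓ` one has `‖M x‖² = ∑ᵢ ‖Q yᵢ‖²`, so `‖M x‖² - 1 = ∑ᵢ (‖Q yᵢ‖² - ‖yᵢ‖²)`.
By homogeneity each piece has `p`-th moment norm at most `‖yᵢ‖²` times the Strong JL bound, and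
Minkowski's inequality together with `∑ᵢ ‖yᵢ‖² = 1` gives the same bound for the sum. -/

open scoped Kronecker Matrix

section SqNorm

variable {ι κ : Type*} [Fintype ι] [Fintype κ]

lemma sqNorm_nonneg (x : ι → ℝ) : 0 ≤ sqNorm x := by
  unfold sqNorm; positivity

lemma sqNorm_smul (a : ℝ) (x : ι → ℝ) : sqNorm (a • x) = a ^ 2 * sqNorm x := by
  simp [sqNorm, Finset.mul_sum, mul_pow]

lemma sqNorm_eq_zero_iff {x : ι → ℝ} : sqNorm x = 0 ↔ x = 0 := by
  simp [sqNorm, Finset.sum_eq_zero_iff_of_nonneg fun i _ => sq_nonneg (x i), funext_iff]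

lemma sqNorm_eq_sum_sqNorm_left (x : ι × κ → ℝ) :
    sqNorm x = ∑ i, sqNorm fun k => x (i, k) :=
  Fintype.sum_prod_type _

lemma sqNorm_eq_sum_sqNorm_right (x : κ × ι → ℝ) :
    sqNorm x = ∑ i, sqNorm fun k => x (k, i) :=
  Fintype.sum_prod_type_right _

lemma exists_sqNorm_eq_one_and_eq_smul {x : ι → ℝ} (hx : x ≠ 0) :
    ∃ u, sqNorm u = 1 ∧ x = √(sqNorm x) • u := by
  have hpos : 0 < √(sqNorm x) :=
    Real.sqrt_pos.2 ((sqNorm_nonneg x).lt_of_ne' (sqNorm_eq_zero_iff.not.2 hx))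
  refine ⟨(√(sqNorm x))⁻¹ • x, ?_, by rw [smul_smul, mul_inv_cancel₀ hpos.ne', one_smul]⟩
  rw [sqNorm_smul, inv_pow, Real.sq_sqrt (sqNorm_nonneg x), inv_mul_cancel₀]
  exact fun h => hpos.ne' (by rw [h, Real.sqrt_zero])

lemma exists_sqNorm_eq_one_sqNorm_mulVec_eq {x : κ → ℝ} (hx : x ≠ 0) :
    ∃ u, sqNorm u = 1 ∧ ∀ A : Matrix ι κ ℝ, sqNorm (A *ᵥ x) = sqNorm x * sqNorm (A *ᵥ u) := by
  obtain ⟨u, hu, hxu⟩ := exists_sqNorm_eq_one_and_eq_smul hx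
  refine ⟨u, hu, fun A => ?_⟩
  conv_lhs => rw [hxu, Matrix.mulVec_smul, sqNorm_smul, Real.sq_sqrt (sqNorm_nonneg x)]

end SqNorm

section Kronecker

variable {l m n : Type*} [Fintype m] [Fintype n] [DecidableEq n]

lemma Matrix.one_kronecker_mulVec_apply (A : Matrix l m ℝ) (x : n × m → ℝ) (i : n) (j : l) :
    ((1 ⊗ₖ A) *ᵥ x) (i, j) = (A *ᵥ fun k => x (i, k)) j :=
  (congrFun (Matrix.vec_mul_eq_mulVec A (Matrix.of fun k i => x (i, k))) (i, j)).symm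

lemma Matrix.kronecker_one_mulVec_apply (A : Matrix l m ℝ) (x : m × n → ℝ) (j : l) (i : n) :
    ((A ⊗ₖ 1) *ᵥ x) (j, i) = (A *ᵥ fun k => x (k, i)) j := by
  have hvec := congrFun (Matrix.kronecker_mulVec_vec 1 (Matrix.of fun i k => x (k, i)) A) (j, i)
  rw [Matrix.one_mul] at hvec
  refine hvec.trans ?_
  simp [Matrix.mulVec, dotProduct, Matrix.mul_apply, Matrix.vec, mul_comm]

lemma sqNorm_one_kronecker_mulVec [Fintype l] (A : Matrix l m ℝ) (x : n × m → ℝ) :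
    sqNorm (((1 : Matrix n n ℝ) ⊗ₖ A) *ᵥ x) = ∑ i, sqNorm (A *ᵥ fun k => x (i, k)) := by
  simp only [sqNorm_eq_sum_sqNorm_left, Matrix.one_kronecker_mulVec_apply]

lemma sqNorm_kronecker_one_mulVec [Fintype l] (A : Matrix l m ℝ) (x : m × n → ℝ) :
    sqNorm ((A ⊗ₖ (1 : Matrix n n ℝ)) *ᵥ x) = ∑ i, sqNorm (A *ᵥ fun k => x (k, i)) := by
  simp only [sqNorm_eq_sum_sqNorm_right, Matrix.kronecker_one_mulVec_apply]

end Kronecker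

section Moments

variable {Ω : Type*} [MeasureSpace Ω] {p : ℝ}

lemma pmom_eq_lpNorm {X : Ω → ℝ} (hX : AEStronglyMeasurable X) (hp : 0 < p) :
    pmom p X = lpNorm X (ENNReal.ofReal p) volume := by
  rw [lpNorm_eq_integral_norm_rpow_toReal (by simpa using hp) ENNReal.ofReal_ne_top hX,
    ENNReal.toReal_ofReal hp.le, pmom, one_div]
  simp only [Real.norm_eq_abs]

lemma pmom_const_mul {a : ℝ} (hp : 0 < p) (ha : 0 ≤ a) (X : Ω → ℝ) :
    pmom p (fun ω => a * X ω) = a * pmom p X := by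
  have h : ∀ ω, |a * X ω| ^ p = a ^ p * |X ω| ^ p := fun ω => by
    rw [abs_mul, abs_of_nonneg ha, Real.mul_rpow ha (abs_nonneg _)]
  simp only [pmom, h, integral_const_mul]
  rw [Real.mul_rpow (by positivity) (integral_nonneg fun ω => by positivity),
    ← Real.rpow_mul ha, mul_one_div_cancel hp.ne', Real.rpow_one]

end Moments

namespace StrongJL

variable {Ω : Type*} [MeasureSpace Ω] {ι κ I : Type*} [Fintype ι] [Fintype κ] [Fintype I]
  {ε δ : ℝ} {Q : Ω → Matrix ι κ ℝ}

lemma integrable_sqNorm_mulVec (hQ : StrongJL ε δ Q) (x : κ → ℝ) :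
    Integrable fun ω => sqNorm (Q ω *ᵥ x) := by
  rcases eq_or_ne x 0 with rfl | hx
  · simp [sqNorm]
  obtain ⟨u, hu, hxu⟩ := exists_sqNorm_eq_one_sqNorm_mulVec_eq (ι := ι) hx
  have hint : Integrable fun ω => sqNorm (Q ω *ᵥ u) :=
    Integrable.of_integral_ne_zero (by rw [(hQ u hu).1]; exact one_ne_zero)
  simpa only [hxu] using hint.const_mul (sqNorm x)

lemma integral_sqNorm_mulVec (hQ : StrongJL ε δ Q) (x : κ → ℝ) :
    ∫ ω, sqNorm (Q ω *ᵥ x) = sqNorm x := by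
  rcases eq_or_ne x 0 with rfl | hx
  · simp [sqNorm]
  obtain ⟨u, hu, hxu⟩ := exists_sqNorm_eq_one_sqNorm_mulVec_eq (ι := ι) hx
  simp only [hxu, integral_const_mul, (hQ u hu).1, mul_one]

lemma pmom_sqNorm_mulVec_sub_le (hQ : StrongJL ε δ Q) (x : κ → ℝ) {p : ℝ} (hp : 2 ≤ p)
    (hpδ : p ≤ Real.log (1 / δ)) :
    pmom p (fun ω => sqNorm (Q ω *ᵥ x) - sqNorm x)
      ≤ sqNorm x * (ε / Real.exp 1 * Real.sqrt (p / Real.log (1 / δ))) := by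
  have hp0 : 0 < p := by linarith
  rcases eq_or_ne x 0 with rfl | hx
  · simp [sqNorm, pmom, hp0.ne']
  obtain ⟨u, hu, hxu⟩ := exists_sqNorm_eq_one_sqNorm_mulVec_eq (ι := ι) hx
  have hsplit : (fun ω => sqNorm (Q ω *ᵥ x) - sqNorm x)
      = fun ω => sqNorm x * (sqNorm (Q ω *ᵥ u) - 1) := by
    funext ω; rw [hxu, mul_sub, mul_one]
  rw [hsplit, pmom_const_mul hp0 (sqNorm_nonneg x)]
  exact mul_le_mul_of_nonneg_left ((hQ u hu).2 p hp hpδ) (sqNorm_nonneg x)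

lemma integral_sum_sqNorm_mulVec (hQ : StrongJL ε δ Q) {y : I → κ → ℝ}
    (hy : ∑ i, sqNorm (y i) = 1) :
    ∫ ω, ∑ i, sqNorm (Q ω *ᵥ y i) = 1 := by
  rw [integral_finsetSum _ fun i _ => hQ.integrable_sqNorm_mulVec (y i)]
  simp only [hQ.integral_sqNorm_mulVec, hy]

/- Minkowski's inequality needs the pieces `‖Q yᵢ‖² - ‖yᵢ‖²` to have finite `p`-th moments; they
do as soon as the deviation does, being squeezed between `-‖yᵢ‖²` and the deviation plus one.
Otherwise `pmom` of the deviation takes the junk value `0`. -/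
lemma pmom_sum_sqNorm_mulVec_sub_one_le [IsProbabilityMeasure (volume : Measure Ω)]
    (hε : 0 ≤ ε) (hQ : StrongJL ε δ Q) {y : I → κ → ℝ} (hy : ∑ i, sqNorm (y i) = 1) {p : ℝ}
    (hp : 2 ≤ p) (hpδ : p ≤ Real.log (1 / δ)) :
    pmom p (fun ω => ∑ i, sqNorm (Q ω *ᵥ y i) - 1)
      ≤ ε / Real.exp 1 * Real.sqrt (p / Real.log (1 / δ)) := by
  have hp0 : 0 < p := by linarith
  set P := ENNReal.ofReal p
  set Y : I → Ω → ℝ := fun i ω => sqNorm (Q ω *ᵥ y i)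
  set F : I → Ω → ℝ := fun i ω => Y i ω - sqNorm (y i)
  have hY : ∀ i, Integrable (Y i) := fun i => hQ.integrable_sqNorm_mulVec (y i)
  have hYnn : ∀ i ω, 0 ≤ Y i ω := fun i ω => sqNorm_nonneg _
  have hF : ∀ i, Integrable (F i) := fun i => (hY i).sub (integrable_const (sqNorm (y i)))
  have hsplit : (fun ω => ∑ i, Y i ω - 1) = ∑ i, F i := by
    funext ω
    simp only [F, Finset.sum_apply, Finset.sum_sub_distrib, hy]
  rw [hsplit, pmom_eq_lpNorm (Finset.aestronglyMeasurable_sum _ fun i _ => (hF i).1) hp0]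
  by_cases hmem : MemLp (∑ i, F i) P
  · have hS : MemLp (fun ω => ∑ i, Y i ω) P := by
      convert (hsplit ▸ hmem).add (memLp_const (1 : ℝ)) using 1
      funext ω
      simp
    have hYS : ∀ i ω, ‖Y i ω‖ ≤ ‖∑ j, Y j ω‖ := fun i ω => by
      rw [Real.norm_of_nonneg (hYnn i ω),
        Real.norm_of_nonneg (Finset.sum_nonneg fun j _ => hYnn j ω)]
      exact Finset.single_le_sum (fun j _ => hYnn j ω) (Finset.mem_univ i)
    have hFP : ∀ i, MemLp (F i) P := fun i =>
      (hS.of_le (hY i).1 (ae_of_all _ (hYS i))).sub (memLp_const _)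
    calc lpNorm (∑ i, F i) P volume ≤ ∑ i, lpNorm (F i) P volume :=
          lpNorm_sum_le (fun i _ => hFP i) (by simpa [P] using by linarith)
      _ = ∑ i, pmom p (F i) := by simp only [P, pmom_eq_lpNorm (hF _).1 hp0]
      _ ≤ ∑ i, sqNorm (y i) * (ε / Real.exp 1 * Real.sqrt (p / Real.log (1 / δ))) :=
          Finset.sum_le_sum fun i _ => hQ.pmom_sqNorm_mulVec_sub_le (y i) hp hpδ
      _ = _ := by rw [← Finset.sum_mul, hy, one_mul]
  · rw [lpNorm_of_not_memLp hmem]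
    positivity

theorem of_sqNorm_mulVec_eq_sum [IsProbabilityMeasure (volume : Measure Ω)] (hε : 0 ≤ ε)
    (hQ : StrongJL ε δ Q) {ι' κ' : Type*} [Fintype ι'] [Fintype κ'] {N : Ω → Matrix ι' κ' ℝ}
    (y : (κ' → ℝ) → I → κ → ℝ) (hy : ∀ x, sqNorm x = ∑ i, sqNorm (y x i))
    (hN : ∀ ω x, sqNorm (N ω *ᵥ x) = ∑ i, sqNorm (Q ω *ᵥ y x i)) :
    StrongJL ε δ N := by
  intro x hx
  rw [hy] at hx
  simp only [hN]
  exact ⟨hQ.integral_sum_sqNorm_mulVec hx,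
    fun p hp hpδ => hQ.pmom_sum_sqNorm_mulVec_sub_one_le hε hx hp hpδ⟩

end StrongJL

theorem strongJL_kronecker_identity_general
    {Ω : Type*} [MeasureSpace Ω] [IsProbabilityMeasure (volume : Measure Ω)]
    (ε δ : ℝ) (hε : ε ∈ Set.Ioo (0 : ℝ) 1)
    (m d : ℕ) (Q : Ω → Matrix (Fin m) (Fin d) ℝ)
    (hQ : StrongJL ε δ Q)
    (ℓ : ℕ) :
    StrongJL ε δ (fun ω => Matrix.kronecker (1 : Matrix (Fin ℓ) (Fin ℓ) ℝ) (Q ω)) ∧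
    StrongJL ε δ (fun ω => Matrix.kronecker (Q ω) (1 : Matrix (Fin ℓ) (Fin ℓ) ℝ)) :=
  ⟨hQ.of_sqNorm_mulVec_eq_sum hε.1.le (fun x i k => x (i, k)) sqNorm_eq_sum_sqNorm_left
      fun ω => sqNorm_one_kronecker_mulVec (Q ω),
    hQ.of_sqNorm_mulVec_eq_sum hε.1.le (fun x i k => x (k, i)) sqNorm_eq_sum_sqNorm_right
      fun ω => sqNorm_kronecker_one_mulVec (Q ω)⟩

/-- tensoring a Strong JL matrix with an identity matrix (on either
side) preserves the Strong JL Moment Property. -/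
theorem strongJL_kronecker_identity
    {Ω : Type*} [MeasureSpace Ω] [IsProbabilityMeasure (volume : Measure Ω)]
    (ε δ : ℝ) (hε : ε ∈ Set.Ioo (0 : ℝ) 1) (hδ : δ ∈ Set.Ioo (0 : ℝ) 1)
    (m d : ℕ) (Q : Ω → Matrix (Fin m) (Fin d) ℝ)
    (hQmeasurableCompat : Measurable Q)
    (hQ : StrongJL ε δ Q)
    (ℓ : ℕ) (hℓ : 1 ≤ ℓ) :
    StrongJL ε δ (fun ω => Matrix.kronecker (1 : Matrix (Fin ℓ) (Fin ℓ) ℝ) (Q ω)) ∧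
    StrongJL ε δ (fun ω => Matrix.kronecker (Q ω) (1 : Matrix (Fin ℓ) (Fin ℓ) ℝ)) :=
  strongJL_kronecker_identity_general ε δ hε m d Q hQ ℓ
end
end

section
/- Let c ≥ 1 be an integer and let σ⁽¹⁾ ∈ {−1,+1}^{d₁}, …, σ⁽ᶜ⁾ ∈ {−1,+1}^{d_c} be mutually independent random vectors, where for each i the coordinates of σ⁽ⁱ⁾ are 4-wise independent and each uniformly distributed on {−1,+1}. Then for every vector x ∈ ℝ^{d₁·d₂⋯d_c}, E[⟨σ⁽¹⁾ ⊗ ⋯ ⊗ σ⁽ᶜ⁾, x⟩⁴] ≤ 3^c·‖x‖₂⁴. -/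
open MeasureTheory ProbabilityTheory Real
open scoped ENNReal NNReal

noncomputable section

lemma my_integral_prod {Ω : Type*} [MeasureSpace Ω] [IsProbabilityMeasure (volume : Measure Ω)]
    {κ : Type*} {X : κ → Ω → ℝ}
    (hind : iIndepFun X volume)
    (hm : ∀ j, Measurable (X j)) (s : Finset κ) :
    (∫ ω, ∏ j ∈ s, X j ω) = ∏ j ∈ s, ∫ ω, X j ω := by
  classical
  induction s using Finset.induction_on with
  | empty => simp
  | @insert a s ha ih =>
    simp only [Finset.prod_insert ha]
    have h1 : IndepFun (X a) (∏ j ∈ s, X j) volume :=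
      (hind.indepFun_finset_prod_of_notMem hm ha).symm
    have hpm : Measurable (∏ j ∈ s, X j) := by
      have : (∏ j ∈ s, X j) = fun ω => ∏ j ∈ s, X j ω := by
        funext ω; exact Finset.prod_apply ω s X
      rw [this]
      exact Finset.measurable_prod _ (fun j _ => hm j)
    have := h1.integral_fun_mul_eq_mul_integral (hm a).aestronglyMeasurable hpm.aestronglyMeasurable
    simp only [Finset.prod_apply] at this
    rw [this, ← ih]

lemma rad_integral : ∫ y, y ∂radMeasure = 0 := by
  have hd : ∀ a : ℝ, Integrable (fun y : ℝ => y) ((2 : ℝ≥0∞)⁻¹ • Measure.dirac a) := by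
    intro a
    refine Integrable.smul_measure ?_ (by norm_num)
    constructor
    · exact measurable_id.aestronglyMeasurable
    · rw [HasFiniteIntegral, lintegral_dirac]
      exact ENNReal.coe_lt_top
  rw [radMeasure, integral_add_measure (hd 1) (hd (-1)), integral_smul_measure,
    integral_smul_measure, integral_dirac, integral_dirac]
  norm_num

lemma zeroE {Ω : Type*} [MeasureSpace Ω] [IsProbabilityMeasure (volume : Measure Ω)]
    {n : ℕ} (τ : Ω → Fin n → ℝ) (hm : Measurable τ)
    (h4 : ∀ s : Finset (Fin n), s.card ≤ 4 →
      iIndepFun (fun j : s => fun ω => τ ω j) volume)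
    (hu : ∀ j, Measure.map (fun ω => τ ω j) volume = radMeasure)
    (t : Finset (Fin n)) (hc : t.card ≤ 4) (hne : t.Nonempty) :
    ∫ ω, ∏ j ∈ t, τ ω j = 0 := by
  classical
  have hmj : ∀ j : Fin n, Measurable (fun ω => τ ω j) :=
    fun j => (measurable_pi_apply j).comp hm
  have hzero : ∀ j : Fin n, ∫ ω, τ ω j = 0 := by
    intro j
    have h := integral_map (μ := volume) (φ := fun ω => τ ω j) (hmj j).aemeasurable
      (f := fun y : ℝ => y) measurable_id.aestronglyMeasurable
    rw [hu j, rad_integral] at h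
    exact h.symm
  have key := my_integral_prod (X := fun j : t => fun ω => τ ω j) (h4 t hc)
    (fun j => hmj j) Finset.univ
  have h1 : ∫ ω, ∏ j ∈ t, τ ω j = ∫ ω, ∏ j : t, τ ω j := by
    apply integral_congr_ae (ae_of_all _ fun ω => ?_)
    exact (Finset.prod_coe_sort t (fun j => τ ω j)).symm
  rw [h1, key]
  obtain ⟨j, hj⟩ := hne
  exact Finset.prod_eq_zero (Finset.mem_univ (⟨j, hj⟩ : t)) (hzero j)

lemma coordE {Ω : Type*} [MeasureSpace Ω] [IsProbabilityMeasure (volume : Measure Ω)]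
    {n : ℕ} (τ : Ω → Fin n → ℝ) (hm : Measurable τ)
    (hs : ∀ ω j, τ ω j = 1 ∨ τ ω j = -1)
    (h4 : ∀ s : Finset (Fin n), s.card ≤ 4 →
      iIndepFun (fun j : s => fun ω => τ ω j) volume)
    (hu : ∀ j, Measure.map (fun ω => τ ω j) volume = radMeasure)
    (a b c d : Fin n) :
    ∫ ω, τ ω a * τ ω b * τ ω c * τ ω d
      = if (a = b ∧ c = d) ∨ (a = c ∧ b = d) ∨ (a = d ∧ b = c) then 1 else 0 := by
  classical
  by_cases hpair : (a = b ∧ c = d) ∨ (a = c ∧ b = d) ∨ (a = d ∧ b = c)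
  · rw [if_pos hpair]
    have hone : ∀ ω, τ ω a * τ ω b * τ ω c * τ ω d = 1 := by
      intro ω
      rcases hpair with ⟨h1, h2⟩ | ⟨h1, h2⟩ | ⟨h1, h2⟩ <;> subst h1 <;> subst h2 <;>
        rcases hs ω a with h | h <;> [rcases hs ω c with h' | h'; rcases hs ω c with h' | h';
          rcases hs ω b with h' | h'; rcases hs ω b with h' | h';
          rcases hs ω b with h' | h'; rcases hs ω b with h' | h'] <;>
        rw [h, h'] <;> ring
    rw [integral_congr_ae (ae_of_all _ hone)]
    simp
  · rw [if_neg hpair]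
    push_neg at hpair
    obtain ⟨h1, h2, h3⟩ := hpair
    have pair2 : ∀ u v : Fin n, u ≠ v →
        (∫ ω, ∏ j ∈ ({u, v} : Finset (Fin n)), τ ω j) = 0 := by
      intro u v huv
      have hcard : ({u, v} : Finset (Fin n)).card ≤ 4 :=
        le_trans (Finset.card_insert_le _ _) (by simp)
      exact zeroE τ hm h4 hu _ hcard ⟨u, by simp⟩
    by_cases hab : a = b
    · subst hab
      have hcd : c ≠ d := h1 rfl
      have key : ∀ ω, τ ω a * τ ω a * τ ω c * τ ω d = ∏ j ∈ ({c, d} : Finset (Fin n)), τ ω j := by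
        intro ω; rw [Finset.prod_pair hcd]; rcases hs ω a with h | h <;> rw [h] <;> ring
      rw [integral_congr_ae (ae_of_all _ key)]; exact pair2 c d hcd
    · by_cases hac : a = c
      · subst hac
        have hbd : b ≠ d := h2 rfl
        have key : ∀ ω, τ ω a * τ ω b * τ ω a * τ ω d = ∏ j ∈ ({b, d} : Finset (Fin n)), τ ω j := by
          intro ω; rw [Finset.prod_pair hbd]; rcases hs ω a with h | h <;> rw [h] <;> ring
        rw [integral_congr_ae (ae_of_all _ key)]; exact pair2 b d hbd
      · by_cases had : a = d
        · subst had
          have hbc : b ≠ c := h3 rfl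
          have key : ∀ ω, τ ω a * τ ω b * τ ω c * τ ω a = ∏ j ∈ ({b, c} : Finset (Fin n)), τ ω j := by
            intro ω; rw [Finset.prod_pair hbc]; rcases hs ω a with h | h <;> rw [h] <;> ring
          rw [integral_congr_ae (ae_of_all _ key)]; exact pair2 b c hbc
        · by_cases hbc : b = c
          · subst hbc
            have key : ∀ ω, τ ω a * τ ω b * τ ω b * τ ω d = ∏ j ∈ ({a, d} : Finset (Fin n)), τ ω j := by
              intro ω; rw [Finset.prod_pair had]; rcases hs ω b with h | h <;> rw [h] <;> ring
            rw [integral_congr_ae (ae_of_all _ key)]; exact pair2 a d had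
          · by_cases hbd : b = d
            · subst hbd
              have key : ∀ ω, τ ω a * τ ω b * τ ω c * τ ω b = ∏ j ∈ ({a, c} : Finset (Fin n)), τ ω j := by
                intro ω; rw [Finset.prod_pair hac]; rcases hs ω b with h | h <;> rw [h] <;> ring
              rw [integral_congr_ae (ae_of_all _ key)]; exact pair2 a c hac
            · by_cases hcd : c = d
              · subst hcd
                have key : ∀ ω, τ ω a * τ ω b * τ ω c * τ ω c = ∏ j ∈ ({a, b} : Finset (Fin n)), τ ω j := by
                  intro ω; rw [Finset.prod_pair hab]; rcases hs ω c with h | h <;> rw [h] <;> ring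
                rw [integral_congr_ae (ae_of_all _ key)]; exact pair2 a b hab
              · -- all four distinct
                have hmemA : a ∉ ({b, c, d} : Finset (Fin n)) := by simp [hab, hac, had]
                have hmemB : b ∉ ({c, d} : Finset (Fin n)) := by simp [hbc, hbd]
                have key : ∀ ω, τ ω a * τ ω b * τ ω c * τ ω d
                    = ∏ j ∈ ({a, b, c, d} : Finset (Fin n)), τ ω j := by
                  intro ω
                  rw [show ({a, b, c, d} : Finset (Fin n)) = insert a (insert b ({c, d})) from rfl,
                    Finset.prod_insert hmemA, Finset.prod_insert hmemB, Finset.prod_pair hcd]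
                  ring
                rw [integral_congr_ae (ae_of_all _ key)]
                have hcard : ({a, b, c, d} : Finset (Fin n)).card ≤ 4 := by
                  refine le_trans (Finset.card_insert_le _ _) (Nat.succ_le_succ ?_)
                  refine le_trans (Finset.card_insert_le _ _) (Nat.succ_le_succ ?_)
                  exact le_trans (Finset.card_insert_le _ _) (by simp)
                exact zeroE τ hm h4 hu _ hcard ⟨a, by simp⟩

lemma swap_bound {B : Type*} [Fintype B] (F : B → B → ℝ) :
    ∑ a1 : B, ∑ b1 : B, F a1 b1 * F b1 a1 ≤ ∑ a1 : B, ∑ b1 : B, F a1 b1 ^ 2 := by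
  have h1 : ∑ a1 : B, ∑ b1 : B, (F a1 b1 * F b1 a1) * 2
      ≤ ∑ a1 : B, ∑ b1 : B, (F a1 b1 ^ 2 + F b1 a1 ^ 2) := by
    refine Finset.sum_le_sum fun a1 _ => Finset.sum_le_sum fun b1 _ => ?_
    nlinarith [sq_nonneg (F a1 b1 - F b1 a1)]
  have h2 : ∑ a1 : B, ∑ b1 : B, (F a1 b1 ^ 2 + F b1 a1 ^ 2)
      = 2 * ∑ a1 : B, ∑ b1 : B, F a1 b1 ^ 2 := by
    simp only [Finset.sum_add_distrib]
    rw [Finset.sum_comm (f := fun a1 b1 => F b1 a1 ^ 2)]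
    ring
  simp only [← Finset.sum_mul] at h1
  rw [h2] at h1
  linarith

lemma abstract3 {A B C : Type*} [Fintype A] [Fintype B] [Fintype C]
    (y : A → B → C → ℝ) :
    ∑ a0 : A, ∑ b0 : A, ∑ a1 : B, ∑ b1 : B, ∑ a2 : C, ∑ b2 : C,
      y a0 a1 a2 * y a0 b1 b2 * y b0 a1 b2 * y b0 b1 a2
      ≤ (∑ a0 : A, ∑ a1 : B, ∑ a2 : C, (y a0 a1 a2) ^ 2) ^ 2 := by
  classical
  set M : A → B → A → B → ℝ := fun p q r s => ∑ w, y p q w * y r s w with hM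
  set N : A → B → ℝ := fun p q => ∑ w, (y p q w) ^ 2 with hN
  have step1 : ∀ a0 b0 a1 b1,
      (∑ a2 : C, ∑ b2 : C, y a0 a1 a2 * y a0 b1 b2 * y b0 a1 b2 * y b0 b1 a2)
        = M a0 a1 b0 b1 * M a0 b1 b0 a1 := by
    intro a0 b0 a1 b1
    rw [hM]; dsimp only
    rw [Finset.sum_mul_sum]
    exact Finset.sum_congr rfl fun a2 _ => Finset.sum_congr rfl fun b2 _ => by ring
  calc ∑ a0 : A, ∑ b0 : A, ∑ a1 : B, ∑ b1 : B, ∑ a2 : C, ∑ b2 : C,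
        y a0 a1 a2 * y a0 b1 b2 * y b0 a1 b2 * y b0 b1 a2
      = ∑ a0 : A, ∑ b0 : A, ∑ a1 : B, ∑ b1 : B, M a0 a1 b0 b1 * M a0 b1 b0 a1 := by
        exact Finset.sum_congr rfl fun a0 _ => Finset.sum_congr rfl fun b0 _ =>
          Finset.sum_congr rfl fun a1 _ => Finset.sum_congr rfl fun b1 _ => step1 a0 b0 a1 b1
    _ ≤ ∑ a0 : A, ∑ b0 : A, ∑ a1 : B, ∑ b1 : B, M a0 a1 b0 b1 ^ 2 := by
        refine Finset.sum_le_sum fun a0 _ => Finset.sum_le_sum fun b0 _ => ?_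
        exact swap_bound (fun a1 b1 => M a0 a1 b0 b1)
    _ ≤ ∑ a0 : A, ∑ b0 : A, ∑ a1 : B, ∑ b1 : B, N a0 a1 * N b0 b1 := by
        refine Finset.sum_le_sum fun a0 _ => Finset.sum_le_sum fun b0 _ =>
          Finset.sum_le_sum fun a1 _ => Finset.sum_le_sum fun b1 _ => ?_
        exact Finset.sum_mul_sq_le_sq_mul_sq _ _ _
    _ = (∑ a0 : A, ∑ a1 : B, N a0 a1) ^ 2 := by
        rw [sq, Finset.sum_mul_sum]
        exact Finset.sum_congr rfl fun a0 _ => Finset.sum_congr rfl fun b0 _ =>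
          (Finset.sum_mul_sum _ _ _ _).symm
    _ = (∑ a0 : A, ∑ a1 : B, ∑ a2 : C, (y a0 a1 a2) ^ 2) ^ 2 := rfl

lemma reorder6 {A B C : Type*} [Fintype A] [Fintype B] [Fintype C] (T : A → B → C → A → B → C → ℝ) :
    ∑ a0 : A, ∑ a1 : B, ∑ a2 : C, ∑ b0 : A, ∑ b1 : B, ∑ b2 : C, T a0 a1 a2 b0 b1 b2
      = ∑ a0 : A, ∑ b0 : A, ∑ a1 : B, ∑ b1 : B, ∑ a2 : C, ∑ b2 : C, T a0 a1 a2 b0 b1 b2 := by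
  apply Finset.sum_congr rfl; intro a0 _
  calc ∑ a1 : B, ∑ a2 : C, ∑ b0 : A, ∑ b1 : B, ∑ b2 : C, T a0 a1 a2 b0 b1 b2
      = ∑ a1 : B, ∑ b0 : A, ∑ a2 : C, ∑ b1 : B, ∑ b2 : C, T a0 a1 a2 b0 b1 b2 :=
        Finset.sum_congr rfl fun a1 _ => Finset.sum_comm
    _ = ∑ b0 : A, ∑ a1 : B, ∑ a2 : C, ∑ b1 : B, ∑ b2 : C, T a0 a1 a2 b0 b1 b2 :=
        Finset.sum_comm
    _ = ∑ b0 : A, ∑ a1 : B, ∑ b1 : B, ∑ a2 : C, ∑ b2 : C, T a0 a1 a2 b0 b1 b2 :=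
        Finset.sum_congr rfl fun b0 _ => Finset.sum_congr rfl fun a1 _ =>
          Finset.sum_comm

lemma comb {c : ℕ} {d : Fin c → ℕ} (P : Fin c → Fin 3) (y : ((i : Fin c) → Fin (d i)) → ℝ) :
    ∑ a : (i : Fin c) → Fin (d i), ∑ b : (i : Fin c) → Fin (d i),
      y a * y (fun i => if P i = 0 then a i else b i)
        * y (fun i => if P i = 1 then a i else b i)
        * y (fun i => if P i = 2 then a i else b i)
      ≤ (∑ f, y f ^ 2) ^ 2 := by
  classical
  have h2 : ∀ t : Fin 3, t ≠ 0 → t ≠ 1 → t = 2 := by decide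
  let A := ∀ i : {i : Fin c // P i = 0}, Fin (d i.1)
  let B := ∀ i : {i : Fin c // P i = 1}, Fin (d i.1)
  let C := ∀ i : {i : Fin c // P i = 2}, Fin (d i.1)
  let e : ((i : Fin c) → Fin (d i)) ≃ A × B × C :=
    { toFun := fun f => (fun i => f i.1, fun i => f i.1, fun i => f i.1)
      invFun := fun t i => if h : P i = 0 then t.1 ⟨i, h⟩
        else if h1 : P i = 1 then t.2.1 ⟨i, h1⟩ else t.2.2 ⟨i, h2 _ h h1⟩
      left_inv := by
        intro f; funext i; dsimp only; split_ifs <;> rfl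
      right_inv := by
        rintro ⟨u, v, w⟩
        refine Prod.ext ?_ (Prod.ext ?_ ?_)
        · funext i; rcases i with ⟨i, hi⟩; dsimp only; rw [dif_pos hi]
        · funext i; rcases i with ⟨i, hi⟩; dsimp only
          rw [dif_neg (by rw [hi]; decide), dif_pos hi]
        · funext i; rcases i with ⟨i, hi⟩; dsimp only
          rw [dif_neg (by rw [hi]; decide), dif_neg (by rw [hi]; decide)] }
  let Y : A → B → C → ℝ := fun u v w => y (e.symm (u, v, w))
  have hy : ∀ f, y f = Y (e f).1 (e f).2.1 (e f).2.2 := by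
    intro f
    show y f = y (e.symm ((e f).1, (e f).2.1, (e f).2.2))
    rw [show ((e f).1, (e f).2.1, (e f).2.2) = e f from rfl, Equiv.symm_apply_apply]
  have hG : ∀ a b : (i : Fin c) → Fin (d i),
      (fun i => if P i = 0 then a i else b i) = e.symm ((e a).1, (e b).2.1, (e b).2.2) := by
    intro a b
    apply e.injective
    rw [Equiv.apply_symm_apply]
    refine Prod.ext ?_ (Prod.ext ?_ ?_)
    · funext i; rcases i with ⟨i, hi⟩
      show (if P i = 0 then a i else b i) = a i
      rw [if_pos hi]
    · funext i; rcases i with ⟨i, hi⟩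
      show (if P i = 0 then a i else b i) = b i
      rw [if_neg (by rw [hi]; decide)]
    · funext i; rcases i with ⟨i, hi⟩
      show (if P i = 0 then a i else b i) = b i
      rw [if_neg (by rw [hi]; decide)]
  have hH : ∀ a b : (i : Fin c) → Fin (d i),
      (fun i => if P i = 1 then a i else b i) = e.symm ((e b).1, (e a).2.1, (e b).2.2) := by
    intro a b
    apply e.injective
    rw [Equiv.apply_symm_apply]
    refine Prod.ext ?_ (Prod.ext ?_ ?_)
    · funext i; rcases i with ⟨i, hi⟩
      show (if P i = 1 then a i else b i) = b i
      rw [if_neg (by rw [hi]; decide)]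
    · funext i; rcases i with ⟨i, hi⟩
      show (if P i = 1 then a i else b i) = a i
      rw [if_pos hi]
    · funext i; rcases i with ⟨i, hi⟩
      show (if P i = 1 then a i else b i) = b i
      rw [if_neg (by rw [hi]; decide)]
  have hK : ∀ a b : (i : Fin c) → Fin (d i),
      (fun i => if P i = 2 then a i else b i) = e.symm ((e b).1, (e b).2.1, (e a).2.2) := by
    intro a b
    apply e.injective
    rw [Equiv.apply_symm_apply]
    refine Prod.ext ?_ (Prod.ext ?_ ?_)
    · funext i; rcases i with ⟨i, hi⟩
      show (if P i = 2 then a i else b i) = b i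
      rw [if_neg (by rw [hi]; decide)]
    · funext i; rcases i with ⟨i, hi⟩
      show (if P i = 2 then a i else b i) = b i
      rw [if_neg (by rw [hi]; decide)]
    · funext i; rcases i with ⟨i, hi⟩
      show (if P i = 2 then a i else b i) = a i
      rw [if_pos hi]
  calc ∑ a : (i : Fin c) → Fin (d i), ∑ b : (i : Fin c) → Fin (d i),
        y a * y (fun i => if P i = 0 then a i else b i)
          * y (fun i => if P i = 1 then a i else b i)
          * y (fun i => if P i = 2 then a i else b i)
      = ∑ t : A × B × C, ∑ t' : A × B × C,
          Y t.1 t.2.1 t.2.2 * Y t.1 t'.2.1 t'.2.2 * Y t'.1 t.2.1 t'.2.2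
            * Y t'.1 t'.2.1 t.2.2 := by
        refine Eq.trans (Finset.sum_congr rfl fun a _ => ?_) (Equiv.sum_comp e
          (fun t => ∑ t' : A × B × C, Y t.1 t.2.1 t.2.2 * Y t.1 t'.2.1 t'.2.2
            * Y t'.1 t.2.1 t'.2.2 * Y t'.1 t'.2.1 t.2.2))
        refine Eq.trans (Finset.sum_congr rfl fun b _ => ?_) (Equiv.sum_comp e
          (fun t' => Y (e a).1 (e a).2.1 (e a).2.2 * Y (e a).1 t'.2.1 t'.2.2
            * Y t'.1 (e a).2.1 t'.2.2 * Y t'.1 t'.2.1 (e a).2.2))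
        rw [hy a, hG a b, hH a b, hK a b]
    _ ≤ (∑ t : A × B × C, Y t.1 t.2.1 t.2.2 ^ 2) ^ 2 := by
        simp only [Fintype.sum_prod_type]
        rw [reorder6]
        exact abstract3 Y
    _ = (∑ f, y f ^ 2) ^ 2 := by
        rw [show (∑ f, y f ^ 2) = ∑ t : A × B × C, Y t.1 t.2.1 t.2.2 ^ 2 from
          Eq.trans (Finset.sum_congr rfl fun f _ => by rw [hy f]) (Equiv.sum_comp e
            (fun t => Y t.1 t.2.1 t.2.2 ^ 2))]

def pcond {α : Type*} (t : Fin 3) (a b c d : α) : Prop :=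
  (t = 0 ∧ a = b ∧ c = d) ∨ (t = 1 ∧ a = c ∧ b = d) ∨ (t = 2 ∧ a = d ∧ b = c)

instance pcondDecidable {α : Type*} [DecidableEq α] (t : Fin 3) (a b c d : α) :
    Decidable (pcond t a b c d) := by
  unfold pcond; infer_instance

lemma ebound {α : Type*} [DecidableEq α] (a b c d : α) :
    (if (a = b ∧ c = d) ∨ (a = c ∧ b = d) ∨ (a = d ∧ b = c) then (1:ℝ) else 0)
      ≤ ∑ t : Fin 3, if pcond t a b c d then (1:ℝ) else 0 := by
  rw [Fin.sum_univ_three]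
  have r0 : pcond (0 : Fin 3) a b c d ↔ (a = b ∧ c = d) := by simp [pcond]
  have r1 : pcond (1 : Fin 3) a b c d ↔ (a = c ∧ b = d) := by simp [pcond]
  have r2 : pcond (2 : Fin 3) a b c d ↔ (a = d ∧ b = c) := by simp [pcond]
  simp only [r0, r1, r2]
  split_ifs <;> norm_num <;> tauto

lemma reindexP {c : ℕ} {d : Fin c → ℕ} (P : Fin c → Fin 3)
    (f : (i : Fin c) → Fin (d i)) (w : ((i : Fin c) → Fin (d i)) → ℝ) :
    (∑ p : ((i : Fin c) → Fin (d i)) × ((i : Fin c) → Fin (d i)) × ((i : Fin c) → Fin (d i)),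
      (if ∀ i, pcond (P i) (f i) (p.1 i) (p.2.1 i) (p.2.2 i) then (1:ℝ) else 0)
        * (w f * w p.1 * w p.2.1 * w p.2.2))
      = ∑ b : (i : Fin c) → Fin (d i), w f * w (fun i => if P i = 0 then f i else b i)
          * w (fun i => if P i = 1 then f i else b i)
          * w (fun i => if P i = 2 then f i else b i) := by
  classical
  have htri : ∀ t : Fin 3, t = 0 ∨ t = 1 ∨ t = 2 := by decide
  simp only [ite_mul, one_mul, zero_mul]
  rw [← Finset.sum_filter]
  have hc0 : ∀ (p : ((i : Fin c) → Fin (d i)) × ((i : Fin c) → Fin (d i)) × ((i : Fin c) → Fin (d i))),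
      (∀ i, pcond (P i) (f i) (p.1 i) (p.2.1 i) (p.2.2 i)) →
      ∀ i, P i = 0 → f i = p.1 i ∧ p.2.1 i = p.2.2 i := by
    intro p hp i h0
    rcases hp i with ⟨_, h⟩ | ⟨hc, _⟩ | ⟨hc, _⟩
    · exact h
    · rw [h0] at hc; exact absurd hc (by decide)
    · rw [h0] at hc; exact absurd hc (by decide)
  have hc1 : ∀ (p : ((i : Fin c) → Fin (d i)) × ((i : Fin c) → Fin (d i)) × ((i : Fin c) → Fin (d i))),
      (∀ i, pcond (P i) (f i) (p.1 i) (p.2.1 i) (p.2.2 i)) →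
      ∀ i, P i = 1 → f i = p.2.1 i ∧ p.1 i = p.2.2 i := by
    intro p hp i h1
    rcases hp i with ⟨hc, _⟩ | ⟨_, h⟩ | ⟨hc, _⟩
    · rw [h1] at hc; exact absurd hc (by decide)
    · exact h
    · rw [h1] at hc; exact absurd hc (by decide)
  have hc2 : ∀ (p : ((i : Fin c) → Fin (d i)) × ((i : Fin c) → Fin (d i)) × ((i : Fin c) → Fin (d i))),
      (∀ i, pcond (P i) (f i) (p.1 i) (p.2.1 i) (p.2.2 i)) →
      ∀ i, P i = 2 → f i = p.2.2 i ∧ p.1 i = p.2.1 i := by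
    intro p hp i h1
    rcases hp i with ⟨hc, _⟩ | ⟨hc, _⟩ | ⟨_, h⟩
    · rw [h1] at hc; exact absurd hc (by decide)
    · rw [h1] at hc; exact absurd hc (by decide)
    · exact h
  refine Finset.sum_bij'
    (fun p _ => (fun i => if P i = 0 then p.2.1 i else p.1 i : (i : Fin c) → Fin (d i)))
    (fun b _ => ((fun i => if P i = 0 then f i else b i : (i : Fin c) → Fin (d i)),
                 (fun i => if P i = 1 then f i else b i : (i : Fin c) → Fin (d i)),
                 (fun i => if P i = 2 then f i else b i : (i : Fin c) → Fin (d i))))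
    (fun p hp => Finset.mem_univ _) ?_ ?_ ?_ ?_
  · -- hj : j b ∈ filter
    intro b _
    rw [Finset.mem_filter]
    refine ⟨Finset.mem_univ _, fun i => ?_⟩
    show pcond (P i) (f i) (if P i = 0 then f i else b i) (if P i = 1 then f i else b i)
      (if P i = 2 then f i else b i)
    rcases htri (P i) with h0 | h1 | h2
    · exact Or.inl ⟨h0, by rw [if_pos h0],
        by rw [if_neg (by rw [h0]; decide), if_neg (by rw [h0]; decide)]⟩
    · exact Or.inr (Or.inl ⟨h1, by rw [if_pos h1],
        by rw [if_neg (by rw [h1]; decide), if_neg (by rw [h1]; decide)]⟩)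
    · exact Or.inr (Or.inr ⟨h2, by rw [if_pos h2],
        by rw [if_neg (by rw [h2]; decide), if_neg (by rw [h2]; decide)]⟩)
  · -- left_inv : j (i p) = p
    intro p hp
    have hp' := (Finset.mem_filter.mp hp).2
    refine Prod.ext ?_ (Prod.ext ?_ ?_) <;> funext i
    · show (if P i = 0 then f i else if P i = 0 then p.2.1 i else p.1 i) = p.1 i
      rcases htri (P i) with h0 | h1 | h2
      · rw [if_pos h0]; exact (hc0 p hp' i h0).1
      · rw [if_neg (by rw [h1]; decide), if_neg (by rw [h1]; decide)]
      · rw [if_neg (by rw [h2]; decide), if_neg (by rw [h2]; decide)]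
    · show (if P i = 1 then f i else if P i = 0 then p.2.1 i else p.1 i) = p.2.1 i
      rcases htri (P i) with h0 | h1 | h2
      · rw [if_neg (by rw [h0]; decide), if_pos h0]
      · rw [if_pos h1]; exact (hc1 p hp' i h1).1
      · rw [if_neg (by rw [h2]; decide), if_neg (by rw [h2]; decide)]
        exact (hc2 p hp' i h2).2
    · show (if P i = 2 then f i else if P i = 0 then p.2.1 i else p.1 i) = p.2.2 i
      rcases htri (P i) with h0 | h1 | h2
      · rw [if_neg (by rw [h0]; decide), if_pos h0]; exact (hc0 p hp' i h0).2
      · rw [if_neg (by rw [h1]; decide), if_neg (by rw [h1]; decide)]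
        exact (hc1 p hp' i h1).2
      · rw [if_pos h2]; exact (hc2 p hp' i h2).1
  · -- right_inv : i (j b) = b
    intro b _
    funext i
    show (if P i = 0 then (if P i = 1 then f i else b i) else (if P i = 0 then f i else b i)) = b i
    rcases htri (P i) with h0 | h1 | h2
    · rw [if_pos h0, if_neg (by rw [h0]; decide)]
    · rw [if_neg (by rw [h1]; decide), if_neg (by rw [h1]; decide)]
    · rw [if_neg (by rw [h2]; decide), if_neg (by rw [h2]; decide)]
  · -- h : terms agree
    intro p hp
    have hp' := (Finset.mem_filter.mp hp).2
    have e1 : (fun i => if P i = 0 then f i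
        else (fun i => if P i = 0 then p.2.1 i else p.1 i) i) = p.1 := by
      funext i
      show (if P i = 0 then f i else if P i = 0 then p.2.1 i else p.1 i) = p.1 i
      rcases htri (P i) with h0 | h1 | h2
      · rw [if_pos h0]; exact (hc0 p hp' i h0).1
      · rw [if_neg (by rw [h1]; decide), if_neg (by rw [h1]; decide)]
      · rw [if_neg (by rw [h2]; decide), if_neg (by rw [h2]; decide)]
    have e2 : (fun i => if P i = 1 then f i
        else (fun i => if P i = 0 then p.2.1 i else p.1 i) i) = p.2.1 := by
      funext i
      show (if P i = 1 then f i else if P i = 0 then p.2.1 i else p.1 i) = p.2.1 i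
      rcases htri (P i) with h0 | h1 | h2
      · rw [if_neg (by rw [h0]; decide), if_pos h0]
      · rw [if_pos h1]; exact (hc1 p hp' i h1).1
      · rw [if_neg (by rw [h2]; decide), if_neg (by rw [h2]; decide)]
        exact (hc2 p hp' i h2).2
    have e3 : (fun i => if P i = 2 then f i
        else (fun i => if P i = 0 then p.2.1 i else p.1 i) i) = p.2.2 := by
      funext i
      show (if P i = 2 then f i else if P i = 0 then p.2.1 i else p.1 i) = p.2.2 i
      rcases htri (P i) with h0 | h1 | h2
      · rw [if_neg (by rw [h0]; decide), if_pos h0]; exact (hc0 p hp' i h0).2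
      · rw [if_neg (by rw [h1]; decide), if_neg (by rw [h1]; decide)]
        exact (hc1 p hp' i h1).2
      · rw [if_pos h2]; exact (hc2 p hp' i h2).1
    show w f * w p.1 * w p.2.1 * w p.2.2 = _
    rw [e1, e2, e3]


/-- fourth-moment bound for tensor products of independent
vectors of 4-wise independent Rademacher variables. -/
theorem fourth_moment_tensor_fourwise
    {Ω : Type*} [MeasureSpace Ω] [IsProbabilityMeasure (volume : Measure Ω)]
    (c : ℕ) (hc : 1 ≤ c) (d : Fin c → ℕ)
    (σ : (i : Fin c) → Ω → Fin (d i) → ℝ)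
    (hmeas : ∀ i, Measurable (σ i))
    (hsign : ∀ i ω j, σ i ω j = 1 ∨ σ i ω j = -1)
    (hindep : iIndepFun σ volume)
    (h4wise : ∀ i (s : Finset (Fin (d i))), s.card ≤ 4 →
      iIndepFun (fun j : s => fun ω => σ i ω j) volume)
    (huniform : ∀ i j, Measure.map (fun ω => σ i ω j) volume = radMeasure) :
    ∀ x : ((i : Fin c) → Fin (d i)) → ℝ,
      (∫ ω, (∑ f : (i : Fin c) → Fin (d i), (∏ i, σ i ω (f i)) * x f) ^ 4)
        ≤ 3 ^ c * (∑ f : (i : Fin c) → Fin (d i), x f ^ 2) ^ 2 := by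
  intro x
  classical
  have hmeasS : ∀ f : (i : Fin c) → Fin (d i), Measurable (fun ω => ∏ i, σ i ω (f i)) :=
    fun f => Finset.measurable_prod _ fun i _ => (measurable_pi_apply (f i)).comp (hmeas i)
  have habsσ : ∀ i (ω : Ω) j, |σ i ω j| = 1 := by
    intro i ω j; rcases hsign i ω j with h | h <;> rw [h] <;> norm_num
  have habsS : ∀ (f : (i : Fin c) → Fin (d i)) (ω : Ω), |∏ i, σ i ω (f i)| = 1 := by
    intro f ω; rw [Finset.abs_prod]; simp [habsσ]
  have hcoord : ∀ (i : Fin c) (a b c' d' : Fin (d i)),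
      ∫ ω, σ i ω a * σ i ω b * σ i ω c' * σ i ω d'
        = if (a = b ∧ c' = d') ∨ (a = c' ∧ b = d') ∨ (a = d' ∧ b = c') then 1 else 0 :=
    fun i => coordE (σ i) (hmeas i) (hsign i) (h4wise i) (huniform i)
  have hq : ∀ f g h k : (i : Fin c) → Fin (d i),
      (∫ ω, (∏ i, σ i ω (f i)) * (∏ i, σ i ω (g i)) * (∏ i, σ i ω (h i)) * (∏ i, σ i ω (k i)))
        = ∏ i, (if (f i = g i ∧ h i = k i) ∨ (f i = h i ∧ g i = k i) ∨ (f i = k i ∧ g i = h i)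
            then (1:ℝ) else 0) := by
    intro f g h k
    have hpt : ∀ ω, (∏ i, σ i ω (f i)) * (∏ i, σ i ω (g i)) * (∏ i, σ i ω (h i))
        * (∏ i, σ i ω (k i))
        = ∏ i, (σ i ω (f i) * σ i ω (g i) * σ i ω (h i) * σ i ω (k i)) := by
      intro ω
      rw [← Finset.prod_mul_distrib, ← Finset.prod_mul_distrib, ← Finset.prod_mul_distrib]
    have hm4 : ∀ i : Fin c, Measurable (fun ω => σ i ω (f i) * σ i ω (g i) * σ i ω (h i)
        * σ i ω (k i)) := fun i =>
      ((((measurable_pi_apply (f i)).comp (hmeas i)).mul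
        ((measurable_pi_apply (g i)).comp (hmeas i))).mul
        ((measurable_pi_apply (h i)).comp (hmeas i))).mul
        ((measurable_pi_apply (k i)).comp (hmeas i))
    have hind2 : iIndepFun
        (fun i => fun ω => σ i ω (f i) * σ i ω (g i) * σ i ω (h i) * σ i ω (k i)) volume := by
      have := hindep.comp
        (fun i => fun v : Fin (d i) → ℝ => v (f i) * v (g i) * v (h i) * v (k i))
        (fun i => (((measurable_pi_apply (f i)).mul (measurable_pi_apply (g i))).mul
          (measurable_pi_apply (h i))).mul (measurable_pi_apply (k i)))
      exact this
    rw [integral_congr_ae (ae_of_all _ hpt), my_integral_prod hind2 hm4 Finset.univ]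
    exact Finset.prod_congr rfl fun i _ => hcoord i (f i) (g i) (h i) (k i)
  have hInt : ∀ q : ((i : Fin c) → Fin (d i)) × ((i : Fin c) → Fin (d i))
      × ((i : Fin c) → Fin (d i)) × ((i : Fin c) → Fin (d i)),
      Integrable (fun ω => (∏ i, σ i ω (q.1 i)) * (∏ i, σ i ω (q.2.1 i))
        * (∏ i, σ i ω (q.2.2.1 i)) * (∏ i, σ i ω (q.2.2.2 i))
        * (x q.1 * x q.2.1 * x q.2.2.1 * x q.2.2.2)) volume := by
    intro q
    refine Integrable.mono' (integrable_const (|x q.1 * x q.2.1 * x q.2.2.1 * x q.2.2.2|))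
      (Measurable.aestronglyMeasurable ?_) (ae_of_all _ fun ω => ?_)
    · exact ((((hmeasS q.1).mul (hmeasS q.2.1)).mul (hmeasS q.2.2.1)).mul
        (hmeasS q.2.2.2)).mul_const _
    · rw [Real.norm_eq_abs, abs_mul, abs_mul, abs_mul, abs_mul, habsS q.1 ω, habsS q.2.1 ω,
        habsS q.2.2.1 ω, habsS q.2.2.2 ω]
      norm_num
  have expand : ∀ ω, (∑ f : (i : Fin c) → Fin (d i), (∏ i, σ i ω (f i)) * x f) ^ 4
      = ∑ q : ((i : Fin c) → Fin (d i)) × ((i : Fin c) → Fin (d i))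
          × ((i : Fin c) → Fin (d i)) × ((i : Fin c) → Fin (d i)),
        (∏ i, σ i ω (q.1 i)) * (∏ i, σ i ω (q.2.1 i)) * (∏ i, σ i ω (q.2.2.1 i))
          * (∏ i, σ i ω (q.2.2.2 i)) * (x q.1 * x q.2.1 * x q.2.2.1 * x q.2.2.2) := by
    intro ω
    rw [show (∑ f : (i : Fin c) → Fin (d i), (∏ i, σ i ω (f i)) * x f) ^ 4
        = (∑ f : (i : Fin c) → Fin (d i), (∏ i, σ i ω (f i)) * x f)
          * ((∑ f : (i : Fin c) → Fin (d i), (∏ i, σ i ω (f i)) * x f)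
          * ((∑ f : (i : Fin c) → Fin (d i), (∏ i, σ i ω (f i)) * x f)
          * (∑ f : (i : Fin c) → Fin (d i), (∏ i, σ i ω (f i)) * x f))) from by ring]
    simp only [Finset.mul_sum, Finset.sum_mul, Fintype.sum_prod_type]
    refine Finset.sum_congr rfl fun f _ => Finset.sum_congr rfl fun g _ =>
      Finset.sum_congr rfl fun h _ => Finset.sum_congr rfl fun k _ => by ring
  have step1 : (∫ ω, (∑ f : (i : Fin c) → Fin (d i), (∏ i, σ i ω (f i)) * x f) ^ 4)
      = ∑ q : ((i : Fin c) → Fin (d i)) × ((i : Fin c) → Fin (d i))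
          × ((i : Fin c) → Fin (d i)) × ((i : Fin c) → Fin (d i)),
        (∏ i, (if (q.1 i = q.2.1 i ∧ q.2.2.1 i = q.2.2.2 i)
            ∨ (q.1 i = q.2.2.1 i ∧ q.2.1 i = q.2.2.2 i)
            ∨ (q.1 i = q.2.2.2 i ∧ q.2.1 i = q.2.2.1 i) then (1:ℝ) else 0))
          * (x q.1 * x q.2.1 * x q.2.2.1 * x q.2.2.2) := by
    rw [integral_congr_ae (ae_of_all _ expand), integral_finset_sum _ (fun q _ => hInt q)]
    refine Finset.sum_congr rfl fun q _ => ?_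
    rw [integral_mul_const, hq q.1 q.2.1 q.2.2.1 q.2.2.2]
  rw [step1]
  have hE4nonneg : ∀ q : ((i : Fin c) → Fin (d i)) × ((i : Fin c) → Fin (d i))
      × ((i : Fin c) → Fin (d i)) × ((i : Fin c) → Fin (d i)),
      (0:ℝ) ≤ ∏ i, (if (q.1 i = q.2.1 i ∧ q.2.2.1 i = q.2.2.2 i)
            ∨ (q.1 i = q.2.2.1 i ∧ q.2.1 i = q.2.2.2 i)
            ∨ (q.1 i = q.2.2.2 i ∧ q.2.1 i = q.2.2.1 i) then (1:ℝ) else 0) :=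
    fun q => Finset.prod_nonneg fun i _ => by split_ifs <;> norm_num
  calc ∑ q : ((i : Fin c) → Fin (d i)) × ((i : Fin c) → Fin (d i))
          × ((i : Fin c) → Fin (d i)) × ((i : Fin c) → Fin (d i)),
        (∏ i, (if (q.1 i = q.2.1 i ∧ q.2.2.1 i = q.2.2.2 i)
            ∨ (q.1 i = q.2.2.1 i ∧ q.2.1 i = q.2.2.2 i)
            ∨ (q.1 i = q.2.2.2 i ∧ q.2.1 i = q.2.2.1 i) then (1:ℝ) else 0))
          * (x q.1 * x q.2.1 * x q.2.2.1 * x q.2.2.2)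
      ≤ ∑ q : ((i : Fin c) → Fin (d i)) × ((i : Fin c) → Fin (d i))
          × ((i : Fin c) → Fin (d i)) × ((i : Fin c) → Fin (d i)),
        (∑ P : Fin c → Fin 3, ∏ i, (if pcond (P i) (q.1 i) (q.2.1 i) (q.2.2.1 i) (q.2.2.2 i)
            then (1:ℝ) else 0))
          * (|x q.1| * |x q.2.1| * |x q.2.2.1| * |x q.2.2.2|) := by
        refine Finset.sum_le_sum fun q _ => ?_
        have h1 : x q.1 * x q.2.1 * x q.2.2.1 * x q.2.2.2
            ≤ |x q.1| * |x q.2.1| * |x q.2.2.1| * |x q.2.2.2| := by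
          calc x q.1 * x q.2.1 * x q.2.2.1 * x q.2.2.2
              ≤ |x q.1 * x q.2.1 * x q.2.2.1 * x q.2.2.2| := le_abs_self _
            _ = |x q.1| * |x q.2.1| * |x q.2.2.1| * |x q.2.2.2| := by
                rw [abs_mul, abs_mul, abs_mul]
        have h2 : (∏ i, (if (q.1 i = q.2.1 i ∧ q.2.2.1 i = q.2.2.2 i)
            ∨ (q.1 i = q.2.2.1 i ∧ q.2.1 i = q.2.2.2 i)
            ∨ (q.1 i = q.2.2.2 i ∧ q.2.1 i = q.2.2.1 i) then (1:ℝ) else 0))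
            ≤ ∑ P : Fin c → Fin 3, ∏ i, (if pcond (P i) (q.1 i) (q.2.1 i) (q.2.2.1 i) (q.2.2.2 i)
              then (1:ℝ) else 0) := by
          calc (∏ i, (if (q.1 i = q.2.1 i ∧ q.2.2.1 i = q.2.2.2 i)
              ∨ (q.1 i = q.2.2.1 i ∧ q.2.1 i = q.2.2.2 i)
              ∨ (q.1 i = q.2.2.2 i ∧ q.2.1 i = q.2.2.1 i) then (1:ℝ) else 0))
              ≤ ∏ i, (∑ t : Fin 3, if pcond t (q.1 i) (q.2.1 i) (q.2.2.1 i) (q.2.2.2 i)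
                  then (1:ℝ) else 0) := by
                refine Finset.prod_le_prod (fun i _ => by split_ifs <;> norm_num)
                  (fun i _ => ebound _ _ _ _)
            _ = ∑ P ∈ Fintype.piFinset (fun _ : Fin c => (Finset.univ : Finset (Fin 3))),
                ∏ i, (if pcond (P i) (q.1 i) (q.2.1 i) (q.2.2.1 i) (q.2.2.2 i)
                  then (1:ℝ) else 0) := Finset.prod_univ_sum _ _
            _ = ∑ P : Fin c → Fin 3, ∏ i, (if pcond (P i) (q.1 i) (q.2.1 i) (q.2.2.1 i)
                  (q.2.2.2 i) then (1:ℝ) else 0) := by rw [Fintype.piFinset_univ]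
        calc (∏ i, (if (q.1 i = q.2.1 i ∧ q.2.2.1 i = q.2.2.2 i)
            ∨ (q.1 i = q.2.2.1 i ∧ q.2.1 i = q.2.2.2 i)
            ∨ (q.1 i = q.2.2.2 i ∧ q.2.1 i = q.2.2.1 i) then (1:ℝ) else 0))
            * (x q.1 * x q.2.1 * x q.2.2.1 * x q.2.2.2)
            ≤ (∏ i, (if (q.1 i = q.2.1 i ∧ q.2.2.1 i = q.2.2.2 i)
                ∨ (q.1 i = q.2.2.1 i ∧ q.2.1 i = q.2.2.2 i)
                ∨ (q.1 i = q.2.2.2 i ∧ q.2.1 i = q.2.2.1 i) then (1:ℝ) else 0))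
              * (|x q.1| * |x q.2.1| * |x q.2.2.1| * |x q.2.2.2|) :=
            mul_le_mul_of_nonneg_left h1 (hE4nonneg q)
          _ ≤ (∑ P : Fin c → Fin 3, ∏ i, (if pcond (P i) (q.1 i) (q.2.1 i) (q.2.2.1 i)
                (q.2.2.2 i) then (1:ℝ) else 0))
              * (|x q.1| * |x q.2.1| * |x q.2.2.1| * |x q.2.2.2|) :=
            mul_le_mul_of_nonneg_right h2 (by positivity)
    _ = ∑ P : Fin c → Fin 3, ∑ q : ((i : Fin c) → Fin (d i)) × ((i : Fin c) → Fin (d i))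
          × ((i : Fin c) → Fin (d i)) × ((i : Fin c) → Fin (d i)),
        (∏ i, (if pcond (P i) (q.1 i) (q.2.1 i) (q.2.2.1 i) (q.2.2.2 i) then (1:ℝ) else 0))
          * (|x q.1| * |x q.2.1| * |x q.2.2.1| * |x q.2.2.2|) := by
        simp only [Finset.sum_mul]
        rw [Finset.sum_comm]
    _ ≤ ∑ P : Fin c → Fin 3, (∑ f : (i : Fin c) → Fin (d i), x f ^ 2) ^ 2 := by
        refine Finset.sum_le_sum fun P _ => ?_
        have h1 : ∑ q : ((i : Fin c) → Fin (d i)) × ((i : Fin c) → Fin (d i))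
            × ((i : Fin c) → Fin (d i)) × ((i : Fin c) → Fin (d i)),
            (∏ i, (if pcond (P i) (q.1 i) (q.2.1 i) (q.2.2.1 i) (q.2.2.2 i) then (1:ℝ) else 0))
              * (|x q.1| * |x q.2.1| * |x q.2.2.1| * |x q.2.2.2|)
            = ∑ f : (i : Fin c) → Fin (d i),
              ∑ p : ((i : Fin c) → Fin (d i)) × ((i : Fin c) → Fin (d i))
                × ((i : Fin c) → Fin (d i)),
              (if ∀ i, pcond (P i) (f i) (p.1 i) (p.2.1 i) (p.2.2 i) then (1:ℝ) else 0)
                * (|x f| * |x p.1| * |x p.2.1| * |x p.2.2|) := by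
          rw [Fintype.sum_prod_type]
          exact Finset.sum_congr rfl fun f _ => Finset.sum_congr rfl fun p _ => by
            rw [Finset.prod_boole]; simp
        rw [h1]
        calc (∑ f : (i : Fin c) → Fin (d i),
              ∑ p : ((i : Fin c) → Fin (d i)) × ((i : Fin c) → Fin (d i))
                × ((i : Fin c) → Fin (d i)),
              (if ∀ i, pcond (P i) (f i) (p.1 i) (p.2.1 i) (p.2.2 i) then (1:ℝ) else 0)
                * (|x f| * |x p.1| * |x p.2.1| * |x p.2.2|))
            = ∑ a : (i : Fin c) → Fin (d i), ∑ b : (i : Fin c) → Fin (d i),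
              |x a| * |x (fun i => if P i = 0 then a i else b i)|
                * |x (fun i => if P i = 1 then a i else b i)|
                * |x (fun i => if P i = 2 then a i else b i)| :=
              Finset.sum_congr rfl fun f _ => reindexP P f (fun g => |x g|)
          _ ≤ (∑ f : (i : Fin c) → Fin (d i), |x f| ^ 2) ^ 2 := comb P (fun g => |x g|)
          _ = (∑ f : (i : Fin c) → Fin (d i), x f ^ 2) ^ 2 := by simp [sq_abs]
    _ = 3 ^ c * (∑ f : (i : Fin c) → Fin (d i), x f ^ 2) ^ 2 := by
        rw [Finset.sum_const, Finset.card_univ, nsmul_eq_mul]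
        congr 1
        rw [Fintype.card_fun]
        simp
end
end
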